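/- The map Φ is a morphism of operads from recursively labelled red and white trees to formal fractions: for all recursively labelled red and white trees T₁ ∈ BWTS(m) with a label x and T₂ ∈ BWTS(n), one has Φ(T₁ ∘_x T₂) = Φ(T₁) ∘_x Φ(T₂) in FF(m+n−1). -/

import Mathlib

open scoped Classical

/-- A *formal fraction*: a finitely supported exponent function on formal symbols `[S]`,
where `S` is a finset of positive integers.  The fraction `∏_S [S]^(e_S)` is encoded by
the function `S ↦ e_S`; multiplication of fractions is addition of exponent functions. -/
abbrev FFrac : Type := Finset ℕ →₀ ℤ

/-- `F` is a formal fraction of arity `n`: all its symbols are nonempty subsets of `{1,…,n}`. -/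
def MemFF (n : ℕ) (F : FFrac) : Prop :=
  ∀ S ∈ F.support, S.Nonempty ∧ S ⊆ Finset.Icc 1 n

/-- Symbol relabelling for the left factor of `∘ᵢ` with an arity-`n` fraction:
indices `j < i` are fixed, `i` is replaced by the whole block `{i,…,i+n-1}`, and
`j > i` is replaced by `j + n - 1`. -/
def subSym (i n : ℕ) (T : Finset ℕ) : Finset ℕ :=
  T.biUnion fun j =>
    if j < i then {j} else if j = i then Finset.Icc i (i + n - 1) else {j + n - 1}

/-- Symbol relabelling for the right factor of `∘ᵢ`: `j ↦ i + j - 1`. -/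
def shiftSym (i : ℕ) (T : Finset ℕ) : Finset ℕ := T.image fun j => i + j - 1

/-- Composition of formal fractions: `F ∘ᵢ G = [S_{i,n}] ⬝ F̂ ⬝ Ĝ`, where `n` is the arity
of `G`.  (`Finsupp.mapDomain` adds the exponents of symbols which become equal.) -/
noncomputable def ffCompose (n i : ℕ) (F G : FFrac) : FFrac :=
  Finsupp.single (Finset.Icc i (i + n - 1)) 1
    + Finsupp.mapDomain (subSym i n) F
    + Finsupp.mapDomain (shiftSym i) G

/-- The formal fraction `1/[1] ∈ FF(1)`. -/
noncomputable def ffUnit : FFrac := Finsupp.single {1} (-1)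

/- A labelled red and white tree on `{1,…,n}` is encoded by the (laminar) family of the
sets `S(z)` of all labels carried by the subtree rooted at each node `z`; this determines
the tree completely (children of a node are the maximal proper members of the family
below it, its own labels are those not appearing in its children, and the condition that
an unlabelled node has at least two children is automatic). -/

/-- The children of the node `S` in the family `fam`: maximal members strictly below `S`. -/
def childrenF (fam : Finset (Finset ℕ)) (S : Finset ℕ) : Finset (Finset ℕ) :=
  fam.filter fun T => T ⊂ S ∧ ∀ U ∈ fam, T ⊂ U → ¬ U ⊂ S

/-- The set of labels carried by the node `S` itself. -/
def labelsOf (fam : Finset (Finset ℕ)) (S : Finset ℕ) : Finset ℕ :=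
  S \ (childrenF fam S).biUnion id

/-- `fam` encodes a labelled red and white tree on `{1,…,n}` (`fam ∈ BWTSL(n)`). -/
def IsRWTree (n : ℕ) (fam : Finset (Finset ℕ)) : Prop :=
  (∀ S ∈ fam, S.Nonempty ∧ S ⊆ Finset.Icc 1 n) ∧
  Finset.Icc 1 n ∈ fam ∧
  ∀ S ∈ fam, ∀ T ∈ fam, S ⊆ T ∨ T ⊆ S ∨ Disjoint S T

/-- The tree is recursively labelled: the total label set of every subtree is an
interval of consecutive integers. -/
def IsRecursive (fam : Finset (Finset ℕ)) : Prop :=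
  ∀ S ∈ fam, ∃ a b : ℕ, S = Finset.Icc a b

/-- The node `S` is red: it carries no label and all of its children are white. -/
def IsRed (fam : Finset (Finset ℕ)) (S : Finset ℕ) : Prop :=
  labelsOf fam S = ∅ ∧ ∀ T ∈ childrenF fam S, ¬ IsRed fam T
termination_by S.card
decreasing_by
  rename_i hT
  exact Finset.card_lt_card (Finset.mem_filter.mp hT).2.1

/-- Relabelling of the first tree in `T₁ ∘ₓ T₂` (`n` the arity of `T₂`): labels `j > x`
are shifted by `n - 1` and the label `x` becomes the whole block `{x,…,x+n-1}`. -/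
def relabL (x n : ℕ) (T : Finset ℕ) : Finset ℕ :=
  T.biUnion fun j =>
    if j < x then {j} else if j = x then Finset.Icc x (x + n - 1) else {j + n - 1}

/-- Relabelling of the second tree in `T₁ ∘ₓ T₂`: labels are shifted by `x - 1`. -/
def relabR (x : ℕ) (T : Finset ℕ) : Finset ℕ := T.image fun j => x + j - 1

/-- The composition `T₁ ∘ₓ T₂` of labelled red and white trees (in the laminar-family
encoding), `n` being the arity of `T₂`.  The four cases correspond to the rules
(R1), (R3), (R2) and (W) respectively:  if the root of `T₂` is red then the result is
`T₂` when `T₁` is the single node labelled `x` (R1); the node `z` of `T₁` containing `x`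
is deleted and the children of the root of `T₂` are attached to its parent when `z` is a
leaf whose only label is `x` (R3); otherwise the root of `T₂` becomes a new child of `z`
(R2).  If the root of `T₂` is not red, it is merged with `z` (W). -/
noncomputable def rwCompose (n x : ℕ) (fam₁ fam₂ : Finset (Finset ℕ)) :
    Finset (Finset ℕ) :=
  let B : Finset ℕ := Finset.Icc x (x + n - 1)
  let f₁ := fam₁.image (relabL x n)
  let f₂ := fam₂.image (relabR x)
  if IsRed fam₂ (Finset.Icc 1 n) then
    if fam₁ = {{x}} then f₂
    else if {x} ∈ fam₁ then (f₁ \ {B}) ∪ (f₂ \ {B})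
    else f₁ ∪ f₂
  else f₁ ∪ (f₂ \ {B})

/-- The unit: the single node labelled `{1}`. -/
def unitT : Finset (Finset ℕ) := {{1}}
/-- `T_≺`: white root labelled `{1}` with a single white child labelled `{2}`. -/
def Tprec : Finset (Finset ℕ) := {{1, 2}, {2}}
/-- `T_≻`: white root labelled `{2}` with a single white child labelled `{1}`. -/
def Tsucc : Finset (Finset ℕ) := {{1, 2}, {1}}
/-- `T_∘`: a single white node labelled `{1,2}`. -/
def Tmid : Finset (Finset ℕ) := {{1, 2}}
/-- `T_⊙`: red empty root with two white children labelled `{1}` and `{2}`. -/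
def Tdot : Finset (Finset ℕ) := {{1, 2}, {1}, {2}}

/-- The map `Φ` from labelled red and white trees to formal fractions: each white node
`z` contributes `[S(z)]⁻¹`, each non-root red node contributes `[S(z)]`, and a red root
contributes `1`. -/
noncomputable def PhiT (n : ℕ) (fam : Finset (Finset ℕ)) : FFrac :=
  ∑ S ∈ fam, Finsupp.single S
    (if IsRed fam S then (if S = Finset.Icc 1 n then 0 else 1) else (-1 : ℤ))


/-!
Every composite `T₁ ∘ₓ T₂` is the graft of `T₂` below the node of `x` in `T₁` (rule (R2)),
possibly with the node `B = {x,…,x+n-1}` deleted, i.e. with the edge above `B` contracted.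
The colour of a node only depends on the part of the family below it, so the nodes of `T₂`
and the nodes of `T₁` off the path from `x` to the root keep their colours. On that path
colours survive too: the node carrying `x` stays white (under (R2) it gets the red child `B`,
under (W) it inherits a label or a red child from the white root of `T₂`); under (R3) the
white leaf `{x}` is replaced by the children of a red root, which are all white; and higher up
the children correspond one-to-one, colour by colour. Hence `Φ(T₁ ∘ₓ T₂)` and
`Φ(T₁) ∘ₓ Φ(T₂)` agree symbol by symbol, except possibly at `[B]`, where the exponent
`1 + e({x}) + e(root of T₂)` is checked case by case.
-/

open Finset Function

section BlockSubstitution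

variable {α β : Type*} [DecidableEq β] {g : α → Finset β}

theorem biUnion_subset_biUnion_iff (hne : ∀ a, (g a).Nonempty)
    (hg : Pairwise (Disjoint on g)) {S T : Finset α} :
    S.biUnion g ⊆ T.biUnion g ↔ S ⊆ T := by
  refine ⟨fun h a ha => ?_, biUnion_subset_biUnion_of_subset_left g⟩
  obtain ⟨b, hb⟩ := hne a
  obtain ⟨a', ha', hba'⟩ := mem_biUnion.1 (h (mem_biUnion.2 ⟨a, ha, hb⟩))
  rcases eq_or_ne a a' with rfl | haa'
  · exact ha'
  · exact absurd hba' (disjoint_left.1 (hg haa') hb)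

theorem biUnion_injective (hne : ∀ a, (g a).Nonempty) (hg : Pairwise (Disjoint on g)) :
    Injective fun S : Finset α => S.biUnion g := fun _ _ h =>
  ((biUnion_subset_biUnion_iff hne hg).1 h.le).antisymm
    ((biUnion_subset_biUnion_iff hne hg).1 h.ge)

theorem biUnion_ssubset_biUnion_iff (hne : ∀ a, (g a).Nonempty)
    (hg : Pairwise (Disjoint on g)) {S T : Finset α} :
    S.biUnion g ⊂ T.biUnion g ↔ S ⊂ T := by
  simp only [ssubset_iff_subset_not_subset, biUnion_subset_biUnion_iff hne hg]

theorem biUnion_sdiff_of_pairwiseDisjoint [DecidableEq α] (hg : Pairwise (Disjoint on g))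
    (S T : Finset α) : (S \ T).biUnion g = S.biUnion g \ T.biUnion g := by
  ext b
  simp only [mem_biUnion, mem_sdiff, not_exists, not_and]
  constructor
  · rintro ⟨a, ⟨haS, haT⟩, hb⟩
    refine ⟨⟨a, haS, hb⟩, fun a' ha'T hb' => haT ?_⟩
    rcases eq_or_ne a a' with rfl | haa'
    · exact ha'T
    · exact absurd hb' (disjoint_left.1 (hg haa') hb)
  · rintro ⟨⟨a, haS, hb⟩, h⟩
    exact ⟨a, ⟨haS, fun haT => h a haT hb⟩, hb⟩

theorem biUnion_eq_empty_iff (hne : ∀ a, (g a).Nonempty) {S : Finset α} :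
    S.biUnion g = ∅ ↔ S = ∅ := by
  simp only [← not_nonempty_iff_eq_empty, biUnion_nonempty, hne, and_true]
  rfl

end BlockSubstitution

section RedWhiteTrees

variable {fam fam' : Finset (Finset ℕ)} {S T : Finset ℕ}

theorem isRed_iff : IsRed fam S ↔ labelsOf fam S = ∅ ∧ ∀ T ∈ childrenF fam S, ¬ IsRed fam T := by
  rw [IsRed]

theorem mem_childrenF :
    T ∈ childrenF fam S ↔ T ∈ fam ∧ T ⊂ S ∧ ∀ U ∈ fam, T ⊂ U → ¬ U ⊂ S := by
  simp [childrenF]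

theorem childrenF_congr (h : ∀ T ⊂ S, T ∈ fam ↔ T ∈ fam') :
    childrenF fam S = childrenF fam' S := by
  ext T
  simp only [mem_childrenF]
  constructor
  · rintro ⟨hT, hTS, hmax⟩
    exact ⟨(h T hTS).1 hT, hTS, fun U hU hTU hUS => hmax U ((h U hUS).2 hU) hTU hUS⟩
  · rintro ⟨hT, hTS, hmax⟩
    exact ⟨(h T hTS).2 hT, hTS, fun U hU hTU hUS => hmax U ((h U hUS).1 hU) hTU hUS⟩

theorem isRed_congr (h : ∀ T ⊂ S, T ∈ fam ↔ T ∈ fam') : IsRed fam S ↔ IsRed fam' S := by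
  induction S using Finset.strongInduction with
  | H S ih =>
    rw [isRed_iff, isRed_iff, labelsOf, labelsOf, childrenF_congr h]
    refine and_congr Iff.rfl (forall₂_congr fun T hT => not_congr ?_)
    have hTS := (mem_childrenF.1 hT).2.1
    exact ih T hTS fun U hUT => h U (hUT.trans hTS)

theorem not_isRed_of_mem_labelsOf {a : ℕ} (ha : a ∈ labelsOf fam S) : ¬ IsRed fam S :=
  fun h => by simp [(isRed_iff.1 h).1] at ha

theorem not_isRed_of_isRed_mem_childrenF (hT : T ∈ childrenF fam S) (hred : IsRed fam T) :
    ¬ IsRed fam S :=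
  fun h => (isRed_iff.1 h).2 T hT hred

theorem not_isRed_singleton (hne : ∀ S ∈ fam, S.Nonempty) (j : ℕ) : ¬ IsRed fam {j} := by
  have hch : childrenF fam {j} = ∅ := by
    ext T
    simp only [mem_childrenF, notMem_empty, iff_false]
    rintro ⟨hT, hTj, -⟩
    exact (hne T hT).ne_empty (ssubset_singleton_iff.1 hTj)
  exact not_isRed_of_mem_labelsOf (a := j) (by simp [labelsOf, hch])

theorem exists_mem_childrenF_superset (hT : T ∈ fam) (hTS : T ⊂ S) :
    ∃ c ∈ childrenF fam S, T ⊆ c := by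
  obtain ⟨c, hc, hcmax⟩ := (fam.filter fun U => T ⊆ U ∧ U ⊂ S).exists_max_image card
    ⟨T, mem_filter.2 ⟨hT, subset_rfl, hTS⟩⟩
  simp only [mem_filter] at hc hcmax
  refine ⟨c, mem_childrenF.2 ⟨hc.1, hc.2.2, fun U hU hcU hUS => ?_⟩, hc.2.1⟩
  exact (hcmax U ⟨hU, hc.2.1.trans hcU.subset, hUS⟩).not_gt (card_lt_card hcU)

theorem notMem_of_mem_labelsOf {a : ℕ} (ha : a ∈ labelsOf fam S) (hT : T ∈ fam)
    (hTS : T ⊂ S) : a ∉ T := fun haT => by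
  obtain ⟨c, hc, hTc⟩ := exists_mem_childrenF_superset hT hTS
  exact (mem_sdiff.1 ha).2 (mem_biUnion.2 ⟨c, hc, hTc haT⟩)

theorem exists_mem_childrenF_of_notMem_labelsOf {a : ℕ} (haS : a ∈ S)
    (ha : a ∉ labelsOf fam S) : ∃ c ∈ childrenF fam S, a ∈ c := by
  simpa [labelsOf, haS] using ha

def IsLaminar (fam : Finset (Finset ℕ)) : Prop :=
  ∀ S ∈ fam, ∀ T ∈ fam, S ⊆ T ∨ T ⊆ S ∨ Disjoint S T

theorem subset_of_mem_childrenF (hlam : IsLaminar fam) {c : Finset ℕ} {a : ℕ}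
    (hT : T ∈ fam) (hTS : T ⊂ S) (hc : c ∈ childrenF fam S) (haT : a ∈ T) (hac : a ∈ c) :
    T ⊆ c := by
  obtain ⟨hcf, -, hcmax⟩ := mem_childrenF.1 hc
  rcases hlam T hT c hcf with h | h | h
  · exact h
  · rcases h.eq_or_ssubset with h | h
    · exact h.ge
    · exact absurd hTS (hcmax T hT h)
  · exact absurd hac (disjoint_left.1 h haT)

theorem eq_of_mem_childrenF (hlam : IsLaminar fam) {c c' : Finset ℕ} {a : ℕ}
    (hc : c ∈ childrenF fam S) (hc' : c' ∈ childrenF fam S) (ha : a ∈ c) (ha' : a ∈ c') :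
    c = c' :=
  (subset_of_mem_childrenF hlam (mem_childrenF.1 hc).1 (mem_childrenF.1 hc).2.1 hc' ha ha').antisymm
    (subset_of_mem_childrenF hlam (mem_childrenF.1 hc').1 (mem_childrenF.1 hc').2.1 hc ha' ha)

theorem isRed_congr_of_childrenF_eq (hch : childrenF fam S = childrenF fam' S)
    (hcol : ∀ c ∈ childrenF fam S, IsRed fam c ↔ IsRed fam' c) :
    IsRed fam S ↔ IsRed fam' S := by
  rw [isRed_iff, isRed_iff, labelsOf, labelsOf, hch]
  exact and_congr Iff.rfl (forall₂_congr fun c hc => not_congr (hcol c (hch ▸ hc)))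

theorem childrenF_congr_outside {c : Finset ℕ} (hc : c ∈ fam) (hc' : c ∈ fam') (hcS : c ⊂ S)
    (h : ∀ V ⊂ S, ¬ V ⊂ c → (V ∈ fam ↔ V ∈ fam')) : childrenF fam S = childrenF fam' S := by
  have key : ∀ {F F' : Finset (Finset ℕ)}, c ∈ F → (∀ V ⊂ S, ¬ V ⊂ c → (V ∈ F ↔ V ∈ F')) →
      childrenF F S ⊆ childrenF F' S := by
    intro F F' hcF hFF' T hT
    obtain ⟨hTF, hTS, hmax⟩ := mem_childrenF.1 hT
    have hTc : ¬ T ⊂ c := fun hTc => hmax c hcF hTc hcS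
    refine mem_childrenF.2 ⟨(hFF' T hTS hTc).1 hTF, hTS, fun U hU hTU hUS => ?_⟩
    by_cases hUc : U ⊂ c
    · exact hTc (hTU.trans hUc)
    · exact hmax U ((hFF' U hUS hUc).2 hU) hTU hUS
  exact (key hc h).antisymm (key hc' fun V hVS hVc => (h V hVS hVc).symm)

end RedWhiteTrees

section BlockSubstitutionTrees

variable {g : ℕ → Finset ℕ} (hne : ∀ j, (g j).Nonempty) (hg : Pairwise (Disjoint on g))
  (fam : Finset (Finset ℕ))

include hne hg

theorem childrenF_image_biUnion (S : Finset ℕ) :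
    childrenF (fam.image (·.biUnion g)) (S.biUnion g)
      = (childrenF fam S).image (·.biUnion g) := by
  have hss {S T : Finset ℕ} := biUnion_ssubset_biUnion_iff hne hg (S := S) (T := T)
  ext V
  simp only [mem_childrenF, mem_image, forall_exists_index, and_imp, forall_apply_eq_imp_iff₂]
  constructor
  · rintro ⟨⟨T, hT, rfl⟩, hTS, hmax⟩
    exact ⟨T, ⟨hT, hss.1 hTS, fun U hU hTU => by simpa [hss] using hmax U hU (hss.2 hTU)⟩, rfl⟩
  · rintro ⟨T, ⟨hT, hTS, hmax⟩, rfl⟩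
    exact ⟨⟨T, hT, rfl⟩, hss.2 hTS, fun U hU hTU => by simpa [hss] using hmax U hU (hss.1 hTU)⟩

theorem labelsOf_image_biUnion (S : Finset ℕ) :
    labelsOf (fam.image (·.biUnion g)) (S.biUnion g) = (labelsOf fam S).biUnion g := by
  rw [labelsOf, labelsOf, childrenF_image_biUnion hne hg, biUnion_sdiff_of_pairwiseDisjoint hg,
    image_biUnion, biUnion_biUnion]
  rfl

theorem isRed_image_biUnion (S : Finset ℕ) :
    IsRed (fam.image (·.biUnion g)) (S.biUnion g) ↔ IsRed fam S := by
  induction S using Finset.strongInduction with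
  | H S ih =>
    rw [isRed_iff, isRed_iff, childrenF_image_biUnion hne hg, labelsOf_image_biUnion hne hg,
      biUnion_eq_empty_iff hne]
    simp only [mem_image, forall_exists_index, and_imp, forall_apply_eq_imp_iff₂]
    exact and_congr Iff.rfl (forall₂_congr fun T hT => not_congr (ih T (mem_childrenF.1 hT).2.1))

end BlockSubstitutionTrees

section ContractEdge

variable {fam : Finset (Finset ℕ)} {S B : Finset ℕ} (hne : ∀ V ∈ fam, V.Nonempty)
  (hnest : ∀ U ∈ fam, U ⊆ B ∨ B ⊆ U ∨ Disjoint U B) (hB : B ∈ childrenF fam S)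
include hnest hB

theorem disjoint_of_mem_childrenF_of_ne {c : Finset ℕ} (hc : c ∈ childrenF fam S)
    (hcB : c ≠ B) : Disjoint c B := by
  obtain ⟨hcf, hcS, hcmax⟩ := mem_childrenF.1 hc
  obtain ⟨hBf, hBS, hBmax⟩ := mem_childrenF.1 hB
  rcases hnest c hcf with h | h | h
  · exact absurd hBS (hcmax B hBf (h.ssubset_of_ne hcB))
  · exact absurd hcS (hBmax c hcf (h.ssubset_of_ne hcB.symm))
  · exact h

include hne

theorem childrenF_erase :
    childrenF (fam.erase B) S = (childrenF fam S).erase B ∪ childrenF fam B := by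
  obtain ⟨hBf, hBS, hBmax⟩ := mem_childrenF.1 hB
  ext V
  simp only [mem_union, mem_erase, mem_childrenF, ne_eq]
  constructor
  · rintro ⟨⟨hVB, hV⟩, hVS, hmax⟩
    by_cases hVB' : V ⊂ B
    · exact Or.inr ⟨hV, hVB', fun U hU hVU hUB =>
        hmax U ⟨(hUB.ne), hU⟩ hVU (hUB.trans hBS)⟩
    · refine Or.inl ⟨hVB, hV, hVS, fun U hU hVU => ?_⟩
      rcases eq_or_ne U B with rfl | hUB
      · exact absurd hVU hVB'
      · exact hmax U ⟨hUB, hU⟩ hVU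
  · rintro (⟨hVB, hV, hVS, hmax⟩ | ⟨hV, hVB, hmax⟩)
    · exact ⟨⟨hVB, hV⟩, hVS, fun U hU => hmax U hU.2⟩
    · refine ⟨⟨hVB.ne, hV⟩, hVB.trans hBS, fun U ⟨hUB, hU⟩ hVU hUS => ?_⟩
      rcases hnest U hU with h | h | h
      · exact hmax U hU hVU (h.ssubset_of_ne hUB)
      · exact hBmax U hU (h.ssubset_of_ne (Ne.symm hUB)) hUS
      · obtain ⟨a, ha⟩ := hne V hV
        exact disjoint_left.1 h (hVU.subset ha) (hVB.subset ha)

theorem labelsOf_erase :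
    labelsOf (fam.erase B) S = labelsOf fam S ∪ labelsOf fam B := by
  have hBS := (mem_childrenF.1 hB).2.1
  ext a
  simp only [labelsOf, childrenF_erase hne hnest hB, mem_union, mem_sdiff, mem_biUnion,
    mem_erase, id, not_exists, not_and]
  by_cases haB : a ∈ B
  · have hsib : ∀ c ∈ childrenF fam S, c ≠ B → a ∉ c := fun c hc hcB hac =>
      disjoint_left.1 (disjoint_of_mem_childrenF_of_ne hnest hB hc hcB) hac haB
    constructor
    · rintro ⟨haS, h⟩
      exact Or.inr ⟨haB, fun c hc => h c (Or.inr hc)⟩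
    · rintro (⟨-, h⟩ | ⟨-, h⟩)
      · exact absurd haB (h B hB)
      · exact ⟨hBS.subset haB, fun c hc => hc.elim (fun hc => hsib c hc.2 hc.1) (h c)⟩
  · constructor
    · rintro ⟨haS, h⟩
      refine Or.inl ⟨haS, fun c hc hac => ?_⟩
      rcases eq_or_ne c B with rfl | hcB
      · exact haB hac
      · exact h c (Or.inl ⟨hcB, hc⟩) hac
    · rintro (⟨haS, h⟩ | ⟨haB', -⟩)
      · exact ⟨haS, fun c hc => hc.elim (fun hc => h c hc.2)
          fun hc hac => haB ((mem_childrenF.1 hc).2.1.subset hac)⟩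
      · exact absurd haB' haB

theorem isRed_erase_iff :
    IsRed (fam.erase B) S ↔ labelsOf fam S = ∅ ∧
      (∀ c ∈ childrenF fam S, c ≠ B → ¬ IsRed fam c) ∧ IsRed fam B := by
  have hBne := hne B (mem_childrenF.1 hB).1
  have hcol : ∀ c ∈ childrenF (fam.erase B) S, IsRed (fam.erase B) c ↔ IsRed fam c := by
    intro c hc
    have hBc : ¬ B ⊂ c := by
      rcases mem_union.1 ((childrenF_erase hne hnest hB).subset hc) with hc | hc
      · obtain ⟨hcB, hc⟩ := mem_erase.1 hc
        obtain ⟨a, ha⟩ := hBne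
        exact fun h => disjoint_left.1 (disjoint_of_mem_childrenF_of_ne hnest hB hc hcB)
          (h.subset ha) ha
      · exact fun h => (mem_childrenF.1 hc).2.1.asymm h
    exact isRed_congr fun T hTc => by
      simp only [mem_erase, and_iff_right_iff_imp]
      rintro - rfl
      exact hBc hTc
  rw [isRed_iff, labelsOf_erase hne hnest hB, union_eq_empty, isRed_iff (S := B),
    forall₂_congr fun c hc => not_congr (hcol c hc), childrenF_erase hne hnest hB]
  simp only [mem_union, mem_erase, or_imp, forall_and, and_imp]
  tauto

end ContractEdge

namespace IsRWTree

variable {n : ℕ} {fam : Finset (Finset ℕ)} (h : IsRWTree n fam)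
include h

theorem nonempty : ∀ S ∈ fam, S.Nonempty := fun S hS => (h.1 S hS).1

theorem subset_Icc {S : Finset ℕ} (hS : S ∈ fam) : S ⊆ Icc 1 n := (h.1 S hS).2

theorem Icc_mem : Icc 1 n ∈ fam := h.2.1

theorem isLaminar : IsLaminar fam := h.2.2

theorem one_le : 1 ≤ n := by
  simpa using h.nonempty _ h.Icc_mem

end IsRWTree

section Relabelling

variable {x n : ℕ}

def leftBlock (x n j : ℕ) : Finset ℕ :=
  if j < x then {j} else if j = x then Icc x (x + n - 1) else {j + n - 1}

theorem subSym_eq_relabL : subSym = relabL := rfl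

theorem shiftSym_eq_relabR : shiftSym = relabR := rfl

def rightBlock (x j : ℕ) : Finset ℕ := {x + j - 1}

theorem relabL_eq_biUnion (S : Finset ℕ) : relabL x n S = S.biUnion (leftBlock x n) := rfl

theorem relabR_eq_biUnion (S : Finset ℕ) : relabR x S = S.biUnion (rightBlock x) :=
  biUnion_singleton.symm

theorem mem_leftBlock {j a : ℕ} :
    a ∈ leftBlock x n j ↔ (j < x ∧ a = j) ∨ (j = x ∧ x ≤ a ∧ a ≤ x + n - 1) ∨
      (x < j ∧ a = j + n - 1) := by
  unfold leftBlock
  split_ifs <;> simp only [mem_singleton, mem_Icc] <;> omega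

theorem leftBlock_nonempty (hn : 1 ≤ n) (j : ℕ) : (leftBlock x n j).Nonempty := by
  unfold leftBlock
  split_ifs <;> simp only [singleton_nonempty, nonempty_Icc]
  omega

theorem pairwise_disjoint_leftBlock (hn : 1 ≤ n) : Pairwise (Disjoint on leftBlock x n) :=
  fun j k hjk => disjoint_left.2 fun a hj hk => hjk <| by
    rw [mem_leftBlock] at hj hk
    omega

theorem rightBlock_nonempty (x j : ℕ) : (rightBlock x j).Nonempty := singleton_nonempty _

theorem pairwise_disjoint_rightBlock (hx : 1 ≤ x) : Pairwise (Disjoint on rightBlock x) :=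
  fun j k hjk => disjoint_singleton.2 (by omega)

theorem relabL_injective (hn : 1 ≤ n) : Injective (relabL x n) :=
  biUnion_injective (leftBlock_nonempty hn) (pairwise_disjoint_leftBlock hn)

theorem relabL_ssubset_relabL_iff (hn : 1 ≤ n) {S T : Finset ℕ} :
    relabL x n S ⊂ relabL x n T ↔ S ⊂ T :=
  biUnion_ssubset_biUnion_iff (leftBlock_nonempty hn) (pairwise_disjoint_leftBlock hn)

theorem relabR_injective (hx : 1 ≤ x) : Injective (relabR x) := by
  simpa only [funext relabR_eq_biUnion] using
    biUnion_injective (rightBlock_nonempty x) (pairwise_disjoint_rightBlock hx)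

theorem relabR_ssubset_relabR_iff (hx : 1 ≤ x) {S T : Finset ℕ} :
    relabR x S ⊂ relabR x T ↔ S ⊂ T := by
  simpa only [relabR_eq_biUnion] using
    biUnion_ssubset_biUnion_iff (rightBlock_nonempty x)
      (pairwise_disjoint_rightBlock hx)

theorem isRed_image_relabL (hn : 1 ≤ n) (fam : Finset (Finset ℕ)) (S : Finset ℕ) :
    IsRed (fam.image (relabL x n)) (relabL x n S) ↔ IsRed fam S :=
  isRed_image_biUnion (leftBlock_nonempty hn) (pairwise_disjoint_leftBlock hn) fam S

theorem isRed_image_relabR (hx : 1 ≤ x) (fam : Finset (Finset ℕ)) (S : Finset ℕ) :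
    IsRed (fam.image (relabR x)) (relabR x S) ↔ IsRed fam S := by
  simpa only [funext relabR_eq_biUnion] using
    isRed_image_biUnion (rightBlock_nonempty x) (pairwise_disjoint_rightBlock hx) fam S

theorem childrenF_image_relabL (hn : 1 ≤ n) (fam : Finset (Finset ℕ)) (S : Finset ℕ) :
    childrenF (fam.image (relabL x n)) (relabL x n S) = (childrenF fam S).image (relabL x n) :=
  childrenF_image_biUnion (leftBlock_nonempty hn) (pairwise_disjoint_leftBlock hn) fam S

theorem labelsOf_image_relabL (hn : 1 ≤ n) (fam : Finset (Finset ℕ)) (S : Finset ℕ) :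
    labelsOf (fam.image (relabL x n)) (relabL x n S) = relabL x n (labelsOf fam S) :=
  labelsOf_image_biUnion (leftBlock_nonempty hn) (pairwise_disjoint_leftBlock hn) fam S

theorem relabL_eq_empty_iff (hn : 1 ≤ n) {S : Finset ℕ} : relabL x n S = ∅ ↔ S = ∅ :=
  biUnion_eq_empty_iff (leftBlock_nonempty hn)

theorem relabL_singleton : relabL x n {x} = Icc x (x + n - 1) := by
  simp [relabL_eq_biUnion, leftBlock]

theorem block_subset_relabL_iff (hn : 1 ≤ n) {S : Finset ℕ} :
    Icc x (x + n - 1) ⊆ relabL x n S ↔ x ∈ S := by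
  rw [← relabL_singleton, relabL_eq_biUnion, relabL_eq_biUnion,
    biUnion_subset_biUnion_iff (leftBlock_nonempty hn) (pairwise_disjoint_leftBlock hn),
    singleton_subset_iff]

theorem disjoint_relabL_block (hn : 1 ≤ n) {S : Finset ℕ} (hxS : x ∉ S) :
    Disjoint (relabL x n S) (Icc x (x + n - 1)) := by
  rw [relabL_eq_biUnion, disjoint_biUnion_left]
  intro j hj
  have hx : leftBlock x n x = Icc x (x + n - 1) := by simp [leftBlock]
  exact hx ▸ pairwise_disjoint_leftBlock hn (ne_of_mem_of_not_mem hj hxS)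

theorem eq_singleton_of_relabL_subset_block (hn : 1 ≤ n) {S : Finset ℕ} (hS : S.Nonempty)
    (h : relabL x n S ⊆ Icc x (x + n - 1)) : S = {x} := by
  rw [← relabL_singleton, relabL_eq_biUnion, relabL_eq_biUnion,
    biUnion_subset_biUnion_iff (leftBlock_nonempty hn) (pairwise_disjoint_leftBlock hn),
    subset_singleton_iff] at h
  exact h.resolve_left hS.ne_empty

theorem relabL_Icc (hx : 1 ≤ x) (hn : 1 ≤ n) {m : ℕ} (hxm : x ≤ m) :
    relabL x n (Icc 1 m) = Icc 1 (m + n - 1) := by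
  ext a
  simp only [relabL_eq_biUnion, mem_biUnion, mem_Icc, mem_leftBlock]
  constructor
  · rintro ⟨j, hj, ha⟩
    omega
  · intro ha
    by_cases h1 : a < x
    · exact ⟨a, by omega⟩
    by_cases h2 : a ≤ x + n - 1
    · exact ⟨x, by omega⟩
    · exact ⟨a - n + 1, by omega⟩

theorem relabR_Icc (hx : 1 ≤ x) : relabR x (Icc 1 n) = Icc x (x + n - 1) := by
  ext a
  simp only [relabR, mem_image, mem_Icc]
  exact ⟨fun ⟨j, hj, hja⟩ => by omega, fun ha => ⟨a - x + 1, by omega⟩⟩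

theorem relabR_subset_block (hx : 1 ≤ x) {T : Finset ℕ} (hT : T ⊆ Icc 1 n) :
    relabR x T ⊆ Icc x (x + n - 1) :=
  relabR_Icc hx ▸ image_subset_image hT

end Relabelling

/-- The exponent of `[S(z)]` in the factor `E(z)` of `Φ`. -/
noncomputable def nodeExponent (k : ℕ) (fam : Finset (Finset ℕ)) (S : Finset ℕ) : ℤ :=
  if IsRed fam S then (if S = Icc 1 k then 0 else 1) else -1

theorem PhiT_apply (k : ℕ) (fam : Finset (Finset ℕ)) (U : Finset ℕ) :
    PhiT k fam U = if U ∈ fam then nodeExponent k fam U else 0 := by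
  simp only [PhiT, Finsupp.finsetSum_apply, Finsupp.single_apply, sum_ite_eq']
  rfl

theorem mapDomain_PhiT_apply {r : Finset ℕ → Finset ℕ} (hr : Injective r) (k : ℕ)
    (fam : Finset (Finset ℕ)) (S : Finset ℕ) :
    Finsupp.mapDomain r (PhiT k fam) (r S) = if S ∈ fam then nodeExponent k fam S else 0 := by
  rw [Finsupp.mapDomain_apply hr, PhiT_apply]

theorem mapDomain_PhiT_apply_of_notMem {r : Finset ℕ → Finset ℕ} {k : ℕ}
    {fam : Finset (Finset ℕ)} {U : Finset ℕ} (hU : U ∉ fam.image r) :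
    Finsupp.mapDomain r (PhiT k fam) U = 0 := by
  refine Finsupp.notMem_support_iff.1 fun h => hU ?_
  refine image_subset_image (fun S hS => ?_) (Finsupp.mapDomain_support h)
  by_contra hSf
  exact Finsupp.mem_support_iff.1 hS (by rw [PhiT_apply, if_neg hSf])

section Composition

variable {m n x : ℕ} {fam₁ fam₂ F : Finset (Finset ℕ)} {S T c : Finset ℕ}

local notation "𝔹" => Icc x (x + n - 1)

/-- The family of rule (R2); every composite is this family, possibly without the block `𝔹`. -/
def graft (n x : ℕ) (fam₁ fam₂ : Finset (Finset ℕ)) : Finset (Finset ℕ) :=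
  fam₁.image (relabL x n) ∪ fam₂.image (relabR x)

theorem rwCompose_subset_graft : rwCompose n x fam₁ fam₂ ⊆ graft n x fam₁ fam₂ := by
  unfold rwCompose graft
  split_ifs
  · exact subset_union_right
  · exact union_subset_union sdiff_subset sdiff_subset
  · exact subset_rfl
  · exact union_subset_union subset_rfl sdiff_subset

theorem erase_rwCompose : (rwCompose n x fam₁ fam₂).erase 𝔹 = (graft n x fam₁ fam₂).erase 𝔹 := by
  unfold rwCompose graft
  split_ifs with hred hfam
  · rw [hfam, image_singleton, relabL_singleton, erase_union_distrib, erase_singleton,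
      empty_union]
  all_goals ext V; simp only [mem_erase, mem_union, mem_sdiff, mem_singleton] <;> tauto

theorem block_mem_image_relabR (h₂ : IsRWTree n fam₂) (hx : 1 ≤ x) :
    𝔹 ∈ fam₂.image (relabR x) :=
  relabR_Icc hx ▸ mem_image_of_mem _ h₂.Icc_mem

theorem block_mem_graft (h₂ : IsRWTree n fam₂) (hx : 1 ≤ x) : 𝔹 ∈ graft n x fam₁ fam₂ :=
  mem_union_right _ (block_mem_image_relabR h₂ hx)

theorem rwCompose_eq_graft (h₂ : IsRWTree n fam₂) (hx : 1 ≤ x) (hB : 𝔹 ∈ rwCompose n x fam₁ fam₂) :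
    rwCompose n x fam₁ fam₂ = graft n x fam₁ fam₂ := by
  rw [← insert_erase hB, erase_rwCompose, insert_erase (block_mem_graft h₂ hx)]

theorem rwCompose_eq_erase_graft (hB : 𝔹 ∉ rwCompose n x fam₁ fam₂) :
    rwCompose n x fam₁ fam₂ = (graft n x fam₁ fam₂).erase 𝔹 := by
  rw [← erase_rwCompose, erase_eq_of_notMem hB]

theorem block_mem_rwCompose_iff_of_singleton_notMem (h₂ : IsRWTree n fam₂) (hx : 1 ≤ x)
    (hx₁ : {x} ∉ fam₁) : 𝔹 ∈ rwCompose n x fam₁ fam₂ ↔ IsRed fam₂ (Icc 1 n) := by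
  have hfam : fam₁ ≠ {{x}} := fun h => hx₁ (h ▸ mem_singleton_self _)
  unfold rwCompose
  split_ifs with hred
  · simp only [hred, iff_true]
    exact mem_union_right _ (block_mem_image_relabR h₂ hx)
  · simp only [hred, iff_false, mem_union, mem_sdiff, mem_singleton, not_true_eq_false,
      and_false, or_false, mem_image, not_exists, not_and]
    intro S hS hSB
    rw [← relabL_singleton, (relabL_injective h₂.one_le).eq_iff] at hSB
    exact hx₁ (hSB ▸ hS)

theorem block_mem_rwCompose_of_eq_singleton (h₂ : IsRWTree n fam₂) (hx : 1 ≤ x)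
    (hfam : fam₁ = {{x}}) : 𝔹 ∈ rwCompose n x fam₁ fam₂ := by
  unfold rwCompose
  split_ifs
  · exact block_mem_image_relabR h₂ hx
  · rw [hfam, image_singleton, relabL_singleton]
    exact mem_union_left _ (mem_singleton_self _)

theorem block_mem_rwCompose_iff_of_singleton_mem (hx₁ : {x} ∈ fam₁) (hfam : fam₁ ≠ {{x}}) :
    𝔹 ∈ rwCompose n x fam₁ fam₂ ↔ ¬ IsRed fam₂ (Icc 1 n) := by
  unfold rwCompose
  split_ifs with hred
  · simp [hred]
  · simp only [hred, not_false_eq_true, iff_true]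
    exact mem_union_left _ (relabL_singleton (n := n) ▸ mem_image_of_mem _ hx₁)

theorem erase_graft_subset_rwCompose :
    (graft n x fam₁ fam₂).erase 𝔹 ⊆ rwCompose n x fam₁ fam₂ := by
  rw [← erase_rwCompose]
  exact erase_subset _ _

theorem relabL_mem_rwCompose (hn : 1 ≤ n) (hS : S ∈ fam₁) (hSx : S ≠ {x}) :
    relabL x n S ∈ rwCompose n x fam₁ fam₂ :=
  erase_graft_subset_rwCompose <| mem_erase.2
    ⟨relabL_singleton (n := n) ▸ (relabL_injective hn).ne hSx,
      mem_union_left _ (mem_image_of_mem _ hS)⟩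

theorem nonempty_of_mem_graft (h₁ : IsRWTree m fam₁) (h₂ : IsRWTree n fam₂) {V : Finset ℕ}
    (hV : V ∈ graft n x fam₁ fam₂) : V.Nonempty := by
  rcases mem_union.1 hV with hV | hV <;> obtain ⟨S, hS, rfl⟩ := mem_image.1 hV
  · exact nonempty_iff_ne_empty.2 fun h =>
      (h₁.nonempty S hS).ne_empty ((relabL_eq_empty_iff h₂.one_le).1 h)
  · exact (h₂.nonempty _ hS).image _

theorem block_nested_of_mem_graft (h₂ : IsRWTree n fam₂) (hx : 1 ≤ x) {V : Finset ℕ}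
    (hV : V ∈ graft n x fam₁ fam₂) : V ⊆ 𝔹 ∨ 𝔹 ⊆ V ∨ Disjoint V 𝔹 := by
  rcases mem_union.1 hV with hV | hV <;> obtain ⟨S, hS, rfl⟩ := mem_image.1 hV
  · by_cases hxS : x ∈ S
    · exact Or.inr (Or.inl ((block_subset_relabL_iff h₂.one_le).2 hxS))
    · exact Or.inr (Or.inr (disjoint_relabL_block h₂.one_le hxS))
  · exact Or.inl (relabR_subset_block hx (h₂.subset_Icc hS))

section Between

variable (h₂ : IsRWTree n fam₂) (hx : 1 ≤ x)
  (hF : F ⊆ graft n x fam₁ fam₂) (hF' : (graft n x fam₁ fam₂).erase (Icc x (x + n - 1)) ⊆ F)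
include h₂ hx hF hF'

theorem isRed_relabR_iff (h₁ : IsRWTree m fam₁) (hT : T ∈ fam₂) :
    IsRed F (relabR x T) ↔ IsRed fam₂ T := by
  have hTB := relabR_subset_block hx (h₂.subset_Icc hT)
  refine (isRed_congr fun V hV => ⟨fun hVF => ?_, fun hV₂ => ?_⟩).trans
    (isRed_image_relabR hx fam₂ T)
  · refine (mem_union.1 (hF hVF)).resolve_left fun hV₁ => ?_
    obtain ⟨S, hS, rfl⟩ := mem_image.1 hV₁
    rw [eq_singleton_of_relabL_subset_block h₂.one_le (h₁.nonempty _ hS)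
      (hV.subset.trans hTB), relabL_singleton] at hV
    exact (hV.trans_subset hTB).ne rfl
  · exact hF' (mem_erase.2 ⟨(hV.trans_subset hTB).ne, mem_union_right _ hV₂⟩)

theorem isRed_relabL_iff_of_notMem (h₁ : IsRWTree m fam₁) (hxS : x ∉ S) :
    IsRed F (relabL x n S) ↔ IsRed fam₁ S := by
  have hdisj := disjoint_relabL_block h₂.one_le hxS
  refine (isRed_congr fun V hV => ⟨fun hVF => ?_, fun hV₁ => ?_⟩).trans
    (isRed_image_relabL h₂.one_le fam₁ S)
  · refine (mem_union.1 (hF hVF)).resolve_right fun hV₂ => ?_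
    obtain ⟨a, ha⟩ := nonempty_of_mem_graft h₁ h₂ (hF hVF)
    obtain ⟨T, hT, rfl⟩ := mem_image.1 hV₂
    exact disjoint_left.1 hdisj (hV.subset ha) (relabR_subset_block hx (h₂.subset_Icc hT) ha)
  · refine hF' (mem_erase.2 ⟨fun hVB => ?_, mem_union_left _ hV₁⟩)
    obtain ⟨a, ha⟩ := nonempty_of_mem_graft h₁ h₂ (x := x) (mem_union_left _ hV₁)
    exact disjoint_left.1 hdisj (hV.subset ha) (hVB ▸ ha)

theorem childrenF_relabL_eq (hc : c ∈ childrenF fam₁ S) (hxc : x ∈ c)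
    (hcF : relabL x n c ∈ F) :
    childrenF F (relabL x n S) = (childrenF fam₁ S).image (relabL x n) := by
  have hn := h₂.one_le
  obtain ⟨hc₁, hcS, -⟩ := mem_childrenF.1 hc
  have hBc : 𝔹 ⊆ relabL x n c := (block_subset_relabL_iff hn).2 hxc
  rw [← childrenF_image_relabL hn]
  refine childrenF_congr_outside hcF (mem_image_of_mem _ hc₁)
    ((relabL_ssubset_relabL_iff hn).2 hcS) fun V _ hVc => ⟨fun hVF => ?_, fun hV₁ => ?_⟩
  · rcases mem_union.1 (hF hVF) with hV₁ | hV₂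
    · exact hV₁
    obtain ⟨T, hT, rfl⟩ := mem_image.1 hV₂
    have hTc := (relabR_subset_block hx (h₂.subset_Icc hT)).trans hBc
    exact hTc.eq_or_ssubset.resolve_right hVc ▸ mem_image_of_mem _ hc₁
  · by_cases hVB : V = 𝔹
    · exact (hVB ▸ hBc).eq_or_ssubset.resolve_right (hVB ▸ hVc) ▸ hcF
    · exact hF' (mem_erase.2 ⟨hVB, mem_union_left _ hV₁⟩)

theorem isRed_block_iff (h₁ : IsRWTree m fam₁) : IsRed F 𝔹 ↔ IsRed fam₂ (Icc 1 n) :=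
  relabR_Icc hx ▸ isRed_relabR_iff h₂ hx hF hF' h₁ h₂.Icc_mem

end Between

theorem block_mem_childrenF_graft (h₂ : IsRWTree n fam₂) (hx : 1 ≤ x) (hSx : S ≠ {x})
    (hlab : x ∈ labelsOf fam₁ S) : 𝔹 ∈ childrenF (graft n x fam₁ fam₂) (relabL x n S) := by
  have hn := h₂.one_le
  have hBS := (block_subset_relabL_iff hn).2 (mem_sdiff.1 hlab).1
  refine mem_childrenF.2 ⟨block_mem_graft h₂ hx, hBS.ssubset_of_ne ?_, fun U hU hBU hUS => ?_⟩
  · rw [← relabL_singleton]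
    exact fun h => hSx (relabL_injective hn h).symm
  rcases mem_union.1 hU with hU | hU <;> obtain ⟨T, hT, rfl⟩ := mem_image.1 hU
  · exact notMem_of_mem_labelsOf hlab hT ((relabL_ssubset_relabL_iff hn).1 hUS)
      ((block_subset_relabL_iff hn).1 hBU.subset)
  · exact hBU.not_subset (relabR_subset_block hx (h₂.subset_Icc hT))

/-- Rules (W) and (R2) at the node carrying the label `x`. -/
theorem not_isRed_rwCompose_of_mem_labelsOf (h₁ : IsRWTree m fam₁) (h₂ : IsRWTree n fam₂)
    (hx : 1 ≤ x) (hSx : S ≠ {x}) (hlab : x ∈ labelsOf fam₁ S) :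
    ¬ IsRed (rwCompose n x fam₁ fam₂) (relabL x n S) := by
  have hx₁ : {x} ∉ fam₁ := fun h => notMem_of_mem_labelsOf hlab h
    ((singleton_subset_iff.2 (mem_sdiff.1 hlab).1).ssubset_of_ne hSx.symm) (mem_singleton_self x)
  have hBch := block_mem_childrenF_graft h₂ hx hSx hlab
  have hBred := isRed_block_iff h₂ hx subset_rfl (erase_subset _ _) h₁
  have hBmem := block_mem_rwCompose_iff_of_singleton_notMem h₂ hx hx₁
  by_cases hB : 𝔹 ∈ rwCompose n x fam₁ fam₂
  · rw [rwCompose_eq_graft h₂ hx hB]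
    exact not_isRed_of_isRed_mem_childrenF hBch (hBred.2 (hBmem.1 hB))
  · rw [rwCompose_eq_erase_graft hB, isRed_erase_iff (fun V => nonempty_of_mem_graft h₁ h₂)
      (fun U => block_nested_of_mem_graft h₂ hx) hBch]
    exact fun h => hB (hBmem.2 (hBred.1 h.2.2))

/-- Rule (R3) at the parent of the leaf `{x}`. -/
theorem isRed_rwCompose_of_singleton_mem_childrenF (h₁ : IsRWTree m fam₁)
    (h₂ : IsRWTree n fam₂) (hx : 1 ≤ x) (hS : S ∈ fam₁) (hc : {x} ∈ childrenF fam₁ S)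
    (hB : 𝔹 ∉ rwCompose n x fam₁ fam₂) :
    IsRed (rwCompose n x fam₁ fam₂) (relabL x n S) ↔ IsRed fam₁ S := by
  have hn := h₂.one_le
  obtain ⟨hx₁, hxS, -⟩ := mem_childrenF.1 hc
  have hfam : fam₁ ≠ {{x}} := by
    rintro rfl
    exact hxS.ne (mem_singleton.1 hS).symm
  have hred₂ : IsRed fam₂ (Icc 1 n) :=
    not_not.1 fun h => hB ((block_mem_rwCompose_iff_of_singleton_mem hx₁ hfam).2 h)
  have hch : childrenF (graft n x fam₁ fam₂) (relabL x n S)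
      = (childrenF fam₁ S).image (relabL x n) :=
    childrenF_relabL_eq h₂ hx subset_rfl (erase_subset _ _) hc (mem_singleton_self x)
      (relabL_singleton (n := n) ▸ block_mem_graft h₂ hx)
  have hBch : 𝔹 ∈ childrenF (graft n x fam₁ fam₂) (relabL x n S) :=
    hch ▸ relabL_singleton (n := n) ▸ mem_image_of_mem _ hc
  rw [rwCompose_eq_erase_graft hB, isRed_erase_iff (fun V => nonempty_of_mem_graft h₁ h₂)
    (fun U => block_nested_of_mem_graft h₂ hx) hBch,
    isRed_block_iff h₂ hx subset_rfl (erase_subset _ _) h₁,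
    isRed_iff (fam := fam₁)]
  have hlab : labelsOf (graft n x fam₁ fam₂) (relabL x n S) = relabL x n (labelsOf fam₁ S) := by
    rw [labelsOf, hch, ← childrenF_image_relabL hn, ← labelsOf, labelsOf_image_relabL hn]
  rw [hlab, relabL_eq_empty_iff hn, hch]
  simp only [mem_image, forall_exists_index, and_imp, forall_apply_eq_imp_iff₂, hred₂, and_true]
  refine and_congr Iff.rfl (forall₂_congr fun T hT => ?_)
  by_cases hTx : T = {x}
  · simp [hTx, relabL_singleton, not_isRed_singleton h₁.nonempty]
  · have hxT : x ∉ T := fun hxT =>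
      hTx (eq_of_mem_childrenF h₁.isLaminar hT hc hxT (mem_singleton_self x))
    have hTB : relabL x n T ≠ 𝔹 := relabL_singleton (n := n) ▸ (relabL_injective hn).ne hTx
    simp only [ne_eq, hTB, not_false_eq_true, forall_const,
      isRed_relabL_iff_of_notMem h₂ hx subset_rfl (erase_subset _ _) h₁ hxT]

theorem isRed_rwCompose_relabL_of_mem (h₁ : IsRWTree m fam₁) (h₂ : IsRWTree n fam₂)
    (hx : 1 ≤ x) (hS : S ∈ fam₁) (hxS : x ∈ S) (hSx : S ≠ {x}) :
    IsRed (rwCompose n x fam₁ fam₂) (relabL x n S) ↔ IsRed fam₁ S := by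
  have hn := h₂.one_le
  have hF := rwCompose_subset_graft (n := n) (x := x) (fam₁ := fam₁) (fam₂ := fam₂)
  have hF' := erase_graft_subset_rwCompose (n := n) (x := x) (fam₁ := fam₁) (fam₂ := fam₂)
  induction S using Finset.strongInduction with
  | H S ih =>
  by_cases hlab : x ∈ labelsOf fam₁ S
  · exact iff_of_false (not_isRed_rwCompose_of_mem_labelsOf h₁ h₂ hx hSx hlab)
      (not_isRed_of_mem_labelsOf hlab)
  obtain ⟨c, hc, hxc⟩ := exists_mem_childrenF_of_notMem_labelsOf hxS hlab
  by_cases hR3 : c = {x} ∧ 𝔹 ∉ rwCompose n x fam₁ fam₂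
  · obtain ⟨rfl, hB⟩ := hR3
    exact isRed_rwCompose_of_singleton_mem_childrenF h₁ h₂ hx hS hc hB
  have hcF : relabL x n c ∈ rwCompose n x fam₁ fam₂ := by
    by_cases hcx : c = {x}
    · rw [hcx, relabL_singleton]
      exact not_not.1 (not_and.1 hR3 hcx)
    · exact relabL_mem_rwCompose hn (mem_childrenF.1 hc).1 hcx
  have hch := childrenF_relabL_eq h₂ hx hF hF' hc hxc hcF
  rw [← isRed_image_relabL hn fam₁ S]
  refine isRed_congr_of_childrenF_eq (hch.trans (childrenF_image_relabL hn fam₁ S).symm) ?_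
  simp only [hch, mem_image, forall_exists_index, and_imp, forall_apply_eq_imp_iff₂,
    isRed_image_relabL hn]
  intro T hT
  obtain ⟨hT₁, hTS, -⟩ := mem_childrenF.1 hT
  by_cases hxT : x ∈ T
  · obtain rfl : T = c := eq_of_mem_childrenF h₁.isLaminar hT hc hxT hxc
    by_cases hTx : T = {x}
    · subst hTx
      have hB : 𝔹 ∈ rwCompose n x fam₁ fam₂ := relabL_singleton (n := n) ▸ hcF
      have hfam : fam₁ ≠ {{x}} := fun h => hSx (mem_singleton.1 (h ▸ hS))
      refine iff_of_false ?_ (not_isRed_singleton h₁.nonempty x)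
      rw [relabL_singleton, isRed_block_iff h₂ hx hF hF' h₁]
      exact (block_mem_rwCompose_iff_of_singleton_mem hT₁ hfam).1 hB
    · exact ih T hTS hT₁ hxT hTx
  · exact isRed_relabL_iff_of_notMem h₂ hx hF hF' h₁ hxT

section Composite

variable (h₁ : IsRWTree m fam₁) (h₂ : IsRWTree n fam₂) (hx : 1 ≤ x) (hxm : x ≤ m)
include h₁ h₂ hx hxm

theorem nodeExponent_rwCompose_relabL {S : Finset ℕ} (hS : S ∈ fam₁) (hSx : S ≠ {x}) :
    nodeExponent (m + n - 1) (rwCompose n x fam₁ fam₂) (relabL x n S)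
      = nodeExponent m fam₁ S := by
  have hn := h₂.one_le
  have hred : IsRed (rwCompose n x fam₁ fam₂) (relabL x n S) ↔ IsRed fam₁ S := by
    by_cases hxS : x ∈ S
    · exact isRed_rwCompose_relabL_of_mem h₁ h₂ hx hS hxS hSx
    · exact isRed_relabL_iff_of_notMem h₂ hx rwCompose_subset_graft
        erase_graft_subset_rwCompose h₁ hxS
  simp only [nodeExponent, hred, ← relabL_Icc hx hn hxm, (relabL_injective hn).eq_iff]

theorem nodeExponent_rwCompose_relabR {T : Finset ℕ} (hT : T ∈ fam₂) (hTn : T ≠ Icc 1 n) :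
    nodeExponent (m + n - 1) (rwCompose n x fam₁ fam₂) (relabR x T)
      = nodeExponent n fam₂ T := by
  have hTB : relabR x T ⊂ 𝔹 := by
    rw [← relabR_Icc hx, relabR_ssubset_relabR_iff hx]
    exact (h₂.subset_Icc hT).ssubset_of_ne hTn
  have hroot : relabR x T ≠ Icc 1 (m + n - 1) := fun h =>
    (h ▸ hTB).not_subset (Icc_subset_Icc (by omega) (by omega))
  simp only [nodeExponent, isRed_relabR_iff h₂ hx rwCompose_subset_graft
    erase_graft_subset_rwCompose h₁ hT, hroot, hTn]

theorem PhiT_rwCompose_apply_block :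
    PhiT (m + n - 1) (rwCompose n x fam₁ fam₂) 𝔹 = 1
      + Finsupp.mapDomain (relabL x n) (PhiT m fam₁) 𝔹
      + Finsupp.mapDomain (relabR x) (PhiT n fam₂) 𝔹 := by
  have hn := h₂.one_le
  have hred := isRed_block_iff h₂ hx rwCompose_subset_graft erase_graft_subset_rwCompose h₁
  have hroot : 𝔹 = Icc 1 (m + n - 1) ↔ Icc 1 m = {x} := by
    rw [← relabL_singleton, ← relabL_Icc hx hn hxm, (relabL_injective hn).eq_iff, eq_comm]
  have e₁ : Finsupp.mapDomain (relabL x n) (PhiT m fam₁) 𝔹 = if {x} ∈ fam₁ then -1 else 0 := by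
    rw [← relabL_singleton, mapDomain_PhiT_apply (relabL_injective hn), nodeExponent,
      if_neg (not_isRed_singleton h₁.nonempty x)]
  have e₂ : Finsupp.mapDomain (relabR x) (PhiT n fam₂) 𝔹
      = if IsRed fam₂ (Icc 1 n) then 0 else -1 := by
    rw [← relabR_Icc hx, mapDomain_PhiT_apply (relabR_injective hx), if_pos h₂.Icc_mem,
      nodeExponent]
    simp
  simp only [PhiT_apply, nodeExponent, hred, hroot, e₁, e₂]
  by_cases hx₁ : {x} ∈ fam₁
  · by_cases hfam : fam₁ = {{x}}
    · have hB := block_mem_rwCompose_of_eq_singleton h₂ hx hfam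
      have hm : Icc 1 m = {x} := mem_singleton.1 (hfam ▸ h₁.Icc_mem)
      by_cases h : IsRed fam₂ (Icc 1 n) <;> simp [h, hB, hm, hx₁]
    · have hB := block_mem_rwCompose_iff_of_singleton_mem (n := n) (fam₂ := fam₂) hx₁ hfam
      by_cases h : IsRed fam₂ (Icc 1 n) <;> simp [h, hB, hx₁]
  · have hB := block_mem_rwCompose_iff_of_singleton_notMem h₂ hx hx₁
    have hm : Icc 1 m ≠ {x} := fun h => hx₁ (h ▸ h₁.Icc_mem)
    by_cases h : IsRed fam₂ (Icc 1 n) <;> simp [h, hB, hx₁, hm]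

theorem PhiT_rwCompose_apply_of_ne_block {U : Finset ℕ} (hU : U ≠ 𝔹) :
    PhiT (m + n - 1) (rwCompose n x fam₁ fam₂) U
      = Finsupp.mapDomain (relabL x n) (PhiT m fam₁) U
        + Finsupp.mapDomain (relabR x) (PhiT n fam₂) U := by
  have hn := h₂.one_le
  have hmem : U ∈ graft n x fam₁ fam₂ → U ∈ rwCompose n x fam₁ fam₂ := fun h =>
    erase_graft_subset_rwCompose (mem_erase.2 ⟨hU, h⟩)
  by_cases hU₁ : U ∈ fam₁.image (relabL x n)
  · obtain ⟨S, hS, rfl⟩ := mem_image.1 hU₁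
    have hSx : S ≠ {x} := by
      rintro rfl
      exact hU relabL_singleton
    have hU₂ : relabL x n S ∉ fam₂.image (relabR x) := fun h => by
      obtain ⟨T, hT, hTS⟩ := mem_image.1 h
      exact hSx (eq_singleton_of_relabL_subset_block hn (h₁.nonempty S hS)
        (hTS ▸ relabR_subset_block hx (h₂.subset_Icc hT)))
    rw [PhiT_apply, if_pos (hmem (mem_union_left _ hU₁)),
      nodeExponent_rwCompose_relabL h₁ h₂ hx hxm hS hSx, mapDomain_PhiT_apply (relabL_injective hn),
      if_pos hS, mapDomain_PhiT_apply_of_notMem hU₂, add_zero]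
  by_cases hU₂ : U ∈ fam₂.image (relabR x)
  · obtain ⟨T, hT, rfl⟩ := mem_image.1 hU₂
    have hTn : T ≠ Icc 1 n := by
      rintro rfl
      exact hU (relabR_Icc hx)
    rw [PhiT_apply, if_pos (hmem (mem_union_right _ hU₂)),
      nodeExponent_rwCompose_relabR h₁ h₂ hx hxm hT hTn, mapDomain_PhiT_apply_of_notMem hU₁,
      mapDomain_PhiT_apply (relabR_injective hx), if_pos hT, zero_add]
  · rw [PhiT_apply, if_neg fun h => (mem_union.1 (rwCompose_subset_graft h)).elim hU₁ hU₂,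
      mapDomain_PhiT_apply_of_notMem hU₁, mapDomain_PhiT_apply_of_notMem hU₂, add_zero]

end Composite

end Composition

theorem phiT_morphism_general (m n x : ℕ) (fam₁ fam₂ : Finset (Finset ℕ))
    (h₁ : IsRWTree m fam₁)
    (h₂ : IsRWTree n fam₂)
    (hx : 1 ≤ x) (hxm : x ≤ m) :
    PhiT (m + n - 1) (rwCompose n x fam₁ fam₂)
      = ffCompose n x (PhiT m fam₁) (PhiT n fam₂) := by
  ext U
  rw [ffCompose, subSym_eq_relabL, shiftSym_eq_relabR, Finsupp.add_apply, Finsupp.add_apply,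
    Finsupp.single_apply]
  split_ifs with hU
  · subst hU
    exact PhiT_rwCompose_apply_block h₁ h₂ hx hxm
  · rw [zero_add]
    exact PhiT_rwCompose_apply_of_ne_block h₁ h₂ hx hxm (Ne.symm hU)

/-- `Φ` is a morphism of operads from recursively labelled red and
white trees to formal fractions. -/
theorem phiT_morphism (m n x : ℕ) (fam₁ fam₂ : Finset (Finset ℕ))
    (h₁ : IsRWTree m fam₁) (hr₁ : IsRecursive fam₁)
    (h₂ : IsRWTree n fam₂) (hr₂ : IsRecursive fam₂)
    (hx : 1 ≤ x) (hxm : x ≤ m) :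
    PhiT (m + n - 1) (rwCompose n x fam₁ fam₂)
      = ffCompose n x (PhiT m fam₁) (PhiT n fam₂) :=
  phiT_morphism_general m n x fam₁ fam₂ h₁ h₂ hx hxm
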